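/- Let M be a finite simple graph whose associated bilinear form B on ℝ^I is positive definite (so M is of type ADE). Let i₁, …, i_p and j₁, …, j_q be sequences of nodes and i, j nodes; set β = (σ_{i₁} ∘ ⋯ ∘ σ_{i_p})(α_i) and γ = (σ_{j₁} ∘ ⋯ ∘ σ_{j_q})(α_j), and define E_β = r_{i₁} ⋯ r_{i_p} · e_i · r_{i_p} ⋯ r_{i₁} and E_γ = r_{j₁} ⋯ r_{j_q} · e_j · r_{j_q} ⋯ r_{j₁} in the Brauer monoid BrM(M). Then: (a) if B(β, γ) = 0, then E_β E_γ = E_γ E_β; and (b) if |B(β, γ)| = 1, then E_β E_γ E_β = E_β. -/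

import Mathlib

/-- Generators of the Brauer monoid: `r i`, `e i` for nodes `i`, and `δ`, `δ⁻¹`. -/
inductive BrauerGen (I : Type) : Type
  | r : I → BrauerGen I
  | e : I → BrauerGen I
  | del : BrauerGen I
  | delInv : BrauerGen I

/-- The defining relations of the Brauer monoid of type `G`. -/
inductive BrauerRel {I : Type} (G : SimpleGraph I) :
    FreeMonoid (BrauerGen I) → FreeMonoid (BrauerGen I) → Prop
  | del_comm (g : BrauerGen I) :
      BrauerRel G (FreeMonoid.of .del * FreeMonoid.of g) (FreeMonoid.of g * FreeMonoid.of .del)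
  | delInv_comm (g : BrauerGen I) :
      BrauerRel G (FreeMonoid.of .delInv * FreeMonoid.of g)
        (FreeMonoid.of g * FreeMonoid.of .delInv)
  | del_delInv : BrauerRel G (FreeMonoid.of .del * FreeMonoid.of .delInv) 1
  | rr (i : I) : BrauerRel G (FreeMonoid.of (.r i) * FreeMonoid.of (.r i)) 1
  | er (i : I) :
      BrauerRel G (FreeMonoid.of (.e i) * FreeMonoid.of (.r i)) (FreeMonoid.of (.e i))
  | re (i : I) :
      BrauerRel G (FreeMonoid.of (.r i) * FreeMonoid.of (.e i)) (FreeMonoid.of (.e i))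
  | ee (i : I) :
      BrauerRel G (FreeMonoid.of (.e i) * FreeMonoid.of (.e i))
        (FreeMonoid.of .del * FreeMonoid.of (.e i))
  | rr_comm (i j : I) (hne : i ≠ j) (hnadj : ¬ G.Adj i j) :
      BrauerRel G (FreeMonoid.of (.r i) * FreeMonoid.of (.r j))
        (FreeMonoid.of (.r j) * FreeMonoid.of (.r i))
  | er_comm (i j : I) (hne : i ≠ j) (hnadj : ¬ G.Adj i j) :
      BrauerRel G (FreeMonoid.of (.e i) * FreeMonoid.of (.r j))
        (FreeMonoid.of (.r j) * FreeMonoid.of (.e i))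
  | ee_comm (i j : I) (hne : i ≠ j) (hnadj : ¬ G.Adj i j) :
      BrauerRel G (FreeMonoid.of (.e i) * FreeMonoid.of (.e j))
        (FreeMonoid.of (.e j) * FreeMonoid.of (.e i))
  | braid (i j : I) (hadj : G.Adj i j) :
      BrauerRel G (FreeMonoid.of (.r i) * FreeMonoid.of (.r j) * FreeMonoid.of (.r i))
        (FreeMonoid.of (.r j) * FreeMonoid.of (.r i) * FreeMonoid.of (.r j))
  | rer (i j : I) (hadj : G.Adj i j) :
      BrauerRel G (FreeMonoid.of (.r j) * FreeMonoid.of (.e i) * FreeMonoid.of (.r j))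
        (FreeMonoid.of (.r i) * FreeMonoid.of (.e j) * FreeMonoid.of (.r i))
  | rre (i j : I) (hadj : G.Adj i j) :
      BrauerRel G (FreeMonoid.of (.r j) * FreeMonoid.of (.r i) * FreeMonoid.of (.e j))
        (FreeMonoid.of (.e i) * FreeMonoid.of (.e j))

/-- The congruence generated by the Brauer relations. -/
def brauerCon {I : Type} (G : SimpleGraph I) : Con (FreeMonoid (BrauerGen I)) :=
  conGen (BrauerRel G)

/-- The Brauer monoid of type `G`. -/
abbrev BrauerMonoid {I : Type} (G : SimpleGraph I) : Type :=
  (brauerCon G).Quotient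

namespace BrauerMonoid

variable {I : Type} (G : SimpleGraph I)

/-- The generator `r i` of the Brauer monoid. -/
def R (i : I) : BrauerMonoid G := (brauerCon G).mk' (FreeMonoid.of (.r i))

/-- The generator `e i` of the Brauer monoid. -/
def E (i : I) : BrauerMonoid G := (brauerCon G).mk' (FreeMonoid.of (.e i))

/-- The generator `δ` of the Brauer monoid. -/
def Delta : BrauerMonoid G := (brauerCon G).mk' (FreeMonoid.of .del)

/-- The generator `δ⁻¹` of the Brauer monoid. -/
def DeltaInv : BrauerMonoid G := (brauerCon G).mk' (FreeMonoid.of .delInv)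

end BrauerMonoid

namespace BrauerMonoid

variable {I : Type} {G : SimpleGraph I}

private lemma mkrel {x y : FreeMonoid (BrauerGen I)} (h : BrauerRel G x y) :
    (brauerCon G).mk' x = (brauerCon G).mk' y :=
  (Con.eq _).mpr (ConGen.Rel.of x y h)

lemma r_r (i : I) : R G i * R G i = 1 := by
  simpa only [map_mul, map_one, R] using mkrel (BrauerRel.rr (G := G) i)

lemma e_r (i : I) : E G i * R G i = E G i := by
  simpa only [map_mul, R, E] using mkrel (BrauerRel.er (G := G) i)

lemma r_e (i : I) : R G i * E G i = E G i := by
  simpa only [map_mul, R, E] using mkrel (BrauerRel.re (G := G) i)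

lemma rr_comm {i j : I} (hne : i ≠ j) (hnadj : ¬ G.Adj i j) :
    R G i * R G j = R G j * R G i := by
  simpa only [map_mul, R, E] using mkrel (BrauerRel.rr_comm i j hne hnadj)

lemma er_comm {i j : I} (hne : i ≠ j) (hnadj : ¬ G.Adj i j) :
    E G i * R G j = R G j * E G i := by
  simpa only [map_mul, R, E] using mkrel (BrauerRel.er_comm i j hne hnadj)

lemma ee_comm {i j : I} (hne : i ≠ j) (hnadj : ¬ G.Adj i j) :
    E G i * E G j = E G j * E G i := by
  simpa only [map_mul, R, E] using mkrel (BrauerRel.ee_comm i j hne hnadj)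

lemma braid {i j : I} (hadj : G.Adj i j) :
    R G i * R G j * R G i = R G j * R G i * R G j := by
  simpa only [map_mul, R, E] using mkrel (BrauerRel.braid i j hadj)

lemma rer {i j : I} (hadj : G.Adj i j) :
    R G j * E G i * R G j = R G i * E G j * R G i := by
  simpa only [map_mul, R, E] using mkrel (BrauerRel.rer i j hadj)

lemma rre {i j : I} (hadj : G.Adj i j) :
    R G j * R G i * E G j = E G i * E G j := by
  simpa only [map_mul, R, E] using mkrel (BrauerRel.rre i j hadj)

/-! Context versions, for rewriting inside left-associated products. -/

lemma r_r' (a : BrauerMonoid G) (i : I) : a * R G i * R G i = a := by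
  rw [mul_assoc, r_r, mul_one]

lemma e_r' (a : BrauerMonoid G) (i : I) : a * E G i * R G i = a * E G i := by
  rw [mul_assoc, e_r]

lemma r_e' (a : BrauerMonoid G) (i : I) : a * R G i * E G i = a * E G i := by
  rw [mul_assoc, r_e]

/-- `r_j e_i r_j = e_i` when `i`, `j` are distinct and non-adjacent. -/
lemma conj_nonadj {i j : I} (hne : i ≠ j) (hnadj : ¬ G.Adj i j) :
    R G j * E G i * R G j = E G i := by
  rw [← er_comm hne hnadj, r_r']

/-- `r_j r_i e_j r_i r_j = e_i` when `i ∼ j`. -/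
lemma conj2_adj {i j : I} (hadj : G.Adj i j) :
    R G j * R G i * E G j * R G i * R G j = E G i := by
  have h := rer (G := G) hadj.symm
  calc R G j * R G i * E G j * R G i * R G j
      = R G j * (R G i * E G j * R G i) * R G j := by simp only [mul_assoc]
    _ = R G j * (R G j * E G i * R G j) * R G j := by rw [h]
    _ = E G i := by
        simp only [← mul_assoc]
        rw [r_r (G := G) j, one_mul, r_r']

/-- `e_i e_j e_i = e_i` when `i ∼ j`. -/
lemma eje {i j : I} (hadj : G.Adj i j) :
    E G i * E G j * E G i = E G i := by
  calc E G i * E G j * E G i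
      = R G j * R G i * E G j * E G i := by rw [rre hadj]
    _ = R G j * R G i * (R G i * R G j * E G i) := by
        rw [mul_assoc (R G j * R G i), rre hadj.symm]
    _ = E G i := by
        simp only [← mul_assoc]
        rw [r_r', r_r (G := G) j, one_mul]

/-! Products of `R`'s along words. -/

/-- The product `r_{k₁} ⋯ r_{k_p}` for a word `w = [k₁, …, k_p]`. -/
def Rw (w : List I) : BrauerMonoid G := (w.map (R G)).prod

/-- The reversed product `r_{k_p} ⋯ r_{k₁}`. -/
def RwI (w : List I) : BrauerMonoid G := (w.reverse.map (R G)).prod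

@[simp] lemma Rw_nil : Rw (G := G) [] = 1 := rfl
@[simp] lemma RwI_nil : RwI (G := G) [] = 1 := rfl

lemma Rw_cons (k : I) (w : List I) : Rw (G := G) (k :: w) = R G k * Rw w := by
  simp [Rw]

lemma RwI_cons (k : I) (w : List I) : RwI (G := G) (k :: w) = RwI w * R G k := by
  simp [RwI]

lemma Rw_RwI (w : List I) : Rw (G := G) w * RwI w = 1 := by
  induction w with
  | nil => simp
  | cons k w ih =>
      rw [Rw_cons, RwI_cons, mul_assoc, ← mul_assoc (Rw w), ih, one_mul, r_r]

lemma RwI_Rw (w : List I) : RwI (G := G) w * Rw w = 1 := by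
  induction w with
  | nil => simp
  | cons k w ih =>
      rw [Rw_cons, RwI_cons, mul_assoc, ← mul_assoc (R G k), r_r, one_mul, ih]

/-- The element `E_{w,i} = r_{k₁} ⋯ r_{k_p} e_i r_{k_p} ⋯ r_{k₁}`. -/
def Ew (w : List I) (i : I) : BrauerMonoid G := Rw w * E G i * RwI w

@[simp] lemma Ew_nil (i : I) : Ew (G := G) [] i = E G i := by simp [Ew]

lemma Ew_cons (k : I) (w : List I) (i : I) :
    Ew (G := G) (k :: w) i = R G k * Ew w i * R G k := by
  simp only [Ew, Rw_cons, RwI_cons, mul_assoc]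

lemma conj_r_inj {k : I} {x y : BrauerMonoid G}
    (h : R G k * x * R G k = R G k * y * R G k) : x = y := by
  have h2 := congrArg (fun z => R G k * z * R G k) h
  simpa only [← mul_assoc, r_r, one_mul, r_r'] using h2

end BrauerMonoid


section Geometric

open Classical in
/-- The Gram matrix of the bilinear form of the geometric representation:
`B(α_i, α_i) = 2`, `B(α_i, α_j) = −1` if `i ∼ j`, and `B(α_i, α_j) = 0` otherwise. -/
noncomputable def cartanEntry {I : Type} (G : SimpleGraph I) (i j : I) : ℝ :=
  if i = j then 2 else if G.Adj i j then -1 else 0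

/-- The symmetric bilinear form `B` of the geometric representation on `ℝ^I`. -/
noncomputable def cartanForm {I : Type} [Fintype I] (G : SimpleGraph I)
    (v w : I → ℝ) : ℝ :=
  ∑ i, ∑ j, v i * cartanEntry G i j * w j

open Classical in
/-- The standard basis vector `α_i` of `ℝ^I`. -/
noncomputable def simpleRoot {I : Type} (i : I) : I → ℝ := Pi.single i 1

/-- The reflection `σ_i : ℝ^I → ℝ^I`, `σ_i(v) = v − B(α_i, v) α_i`. -/
noncomputable def simpleReflection {I : Type} [Fintype I] (G : SimpleGraph I) (i : I)
    (v : I → ℝ) : I → ℝ :=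
  v - cartanForm G (simpleRoot i) v • simpleRoot i

end Geometric

section GeometricLemmas

set_option linter.unusedSectionVars false

open Finset

variable {I : Type} [Fintype I] {G : SimpleGraph I}

lemma cartanEntry_self (i : I) : cartanEntry G i i = 2 := by simp [cartanEntry]

lemma cartanEntry_adj {i j : I} (h : G.Adj i j) : cartanEntry G i j = -1 := by
  simp [cartanEntry, G.ne_of_adj h, h]

lemma cartanEntry_nonadj {i j : I} (hne : i ≠ j) (h : ¬ G.Adj i j) :
    cartanEntry G i j = 0 := by
  simp [cartanEntry, hne, h]

lemma cartanEntry_symm (i j : I) : cartanEntry G i j = cartanEntry G j i := by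
  unfold cartanEntry
  by_cases h : i = j
  · subst h; simp
  · rw [if_neg h, if_neg (Ne.symm h)]
    by_cases ha : G.Adj i j
    · rw [if_pos ha, if_pos ha.symm]
    · rw [if_neg ha, if_neg fun h' => ha h'.symm]

lemma form_symm (u v : I → ℝ) : cartanForm G u v = cartanForm G v u := by
  unfold cartanForm
  rw [Finset.sum_comm]
  exact Finset.sum_congr rfl fun j _ => Finset.sum_congr rfl fun i _ => by
    rw [cartanEntry_symm]; ring

lemma form_sub_left (u v w : I → ℝ) :
    cartanForm G (u - v) w = cartanForm G u w - cartanForm G v w := by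
  simp only [cartanForm, Pi.sub_apply, ← Finset.sum_sub_distrib]
  exact Finset.sum_congr rfl fun i _ => Finset.sum_congr rfl fun j _ => by ring

lemma form_sub_right (u v w : I → ℝ) :
    cartanForm G u (v - w) = cartanForm G u v - cartanForm G u w := by
  simp only [cartanForm, Pi.sub_apply, ← Finset.sum_sub_distrib]
  exact Finset.sum_congr rfl fun i _ => Finset.sum_congr rfl fun j _ => by ring

lemma form_add_right (u v w : I → ℝ) :
    cartanForm G u (v + w) = cartanForm G u v + cartanForm G u w := by
  simp only [cartanForm, Pi.add_apply, ← Finset.sum_add_distrib]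
  exact Finset.sum_congr rfl fun i _ => Finset.sum_congr rfl fun j _ => by ring

lemma form_smul_left (c : ℝ) (u w : I → ℝ) :
    cartanForm G (c • u) w = c * cartanForm G u w := by
  simp only [cartanForm, Pi.smul_apply, smul_eq_mul, Finset.mul_sum]
  exact Finset.sum_congr rfl fun i _ => Finset.sum_congr rfl fun j _ => by ring

lemma form_smul_right (c : ℝ) (u w : I → ℝ) :
    cartanForm G u (c • w) = c * cartanForm G u w := by
  simp only [cartanForm, Pi.smul_apply, smul_eq_mul, Finset.mul_sum]
  exact Finset.sum_congr rfl fun i _ => Finset.sum_congr rfl fun j _ => by ring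

lemma form_neg_right (u w : I → ℝ) : cartanForm G u (-w) = -cartanForm G u w := by
  have := form_smul_right (G := G) (-1) u w
  simpa using this

lemma form_neg_left (u w : I → ℝ) : cartanForm G (-u) w = -cartanForm G u w := by
  rw [form_symm, form_neg_right, form_symm]

lemma form_simpleRoot_left (i : I) (v : I → ℝ) :
    cartanForm G (simpleRoot i) v = ∑ j, cartanEntry G i j * v j := by
  unfold cartanForm simpleRoot
  rw [Finset.sum_eq_single i]
  · simp
  · intro b _ hb
    simp [Pi.single_apply, hb]
  · intro h; exact absurd (Finset.mem_univ i) h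

lemma form_simpleRoot_both (i j : I) :
    cartanForm G (simpleRoot i) (simpleRoot j) = cartanEntry G i j := by
  rw [form_simpleRoot_left]
  unfold simpleRoot
  rw [Finset.sum_eq_single j]
  · simp
  · intro b _ hb
    simp [Pi.single_apply, hb]
  · intro h; exact absurd (Finset.mem_univ j) h

lemma form_simpleRoot_self (i : I) :
    cartanForm G (simpleRoot i) (simpleRoot i) = 2 := by
  rw [form_simpleRoot_both, cartanEntry_self]

lemma form_eq_sum (u v : I → ℝ) :
    cartanForm G u v = ∑ i, u i * cartanForm G (simpleRoot i) v := by
  simp only [form_simpleRoot_left, Finset.mul_sum]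
  unfold cartanForm
  exact Finset.sum_congr rfl fun i _ => Finset.sum_congr rfl fun j _ => by ring

/-- `σ_k` preserves the bilinear form. -/
lemma form_reflect_both (k : I) (u v : I → ℝ) :
    cartanForm G (simpleReflection G k u) (simpleReflection G k v) =
      cartanForm G u v := by
  unfold simpleReflection
  simp only [form_sub_left, form_sub_right, form_smul_left, form_smul_right,
    form_simpleRoot_self]
  rw [form_symm u (simpleRoot k)]
  ring

lemma form_reflect_right (k : I) (u v : I → ℝ) :
    cartanForm G u (simpleReflection G k v) =
      cartanForm G u v - cartanForm G (simpleRoot k) v * cartanForm G u (simpleRoot k) := by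
  unfold simpleReflection
  rw [form_sub_right, form_smul_right]

lemma form_reflect_left (k : I) (u v : I → ℝ) :
    cartanForm G (simpleReflection G k u) v =
      cartanForm G u v - cartanForm G (simpleRoot k) u * cartanForm G (simpleRoot k) v := by
  unfold simpleReflection
  rw [form_sub_left, form_smul_left]

lemma reflect_reflect (k : I) (v : I → ℝ) :
    simpleReflection G k (simpleReflection G k v) = v := by
  unfold simpleReflection
  rw [form_sub_right, form_smul_right, form_simpleRoot_self]
  ext x
  simp only [Pi.sub_apply, Pi.smul_apply, smul_eq_mul]
  ring

lemma reflect_of_orth {k : I} {v : I → ℝ} (h : cartanForm G (simpleRoot k) v = 0) :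
    simpleReflection G k v = v := by
  unfold simpleReflection
  rw [h]
  simp

lemma reflect_simpleRoot_self (i : I) :
    simpleReflection G i (simpleRoot i) = -simpleRoot i := by
  unfold simpleReflection
  rw [form_simpleRoot_self]
  ext x
  simp only [Pi.sub_apply, Pi.smul_apply, smul_eq_mul, Pi.neg_apply]
  ring

lemma reflect_simpleRoot_nonadj {k i : I} (hne : k ≠ i) (h : ¬ G.Adj k i) :
    simpleReflection G k (simpleRoot i) = simpleRoot i :=
  reflect_of_orth (by rw [form_simpleRoot_both, cartanEntry_nonadj hne h])

lemma reflect_simpleRoot_adj {k i : I} (h : G.Adj k i) :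
    simpleReflection G k (simpleRoot i) = simpleRoot i + simpleRoot k := by
  unfold simpleReflection
  rw [form_simpleRoot_both, cartanEntry_adj h]
  ext x
  simp only [Pi.sub_apply, Pi.smul_apply, smul_eq_mul, Pi.add_apply]
  ring

/-- commuting reflections for non-adjacent nodes -/
lemma reflect_comm {k m : I} (hne : k ≠ m) (hnadj : ¬ G.Adj k m) (v : I → ℝ) :
    simpleReflection G k (simpleReflection G m v) =
      simpleReflection G m (simpleReflection G k v) := by
  have h0 : cartanForm G (simpleRoot k) (simpleRoot m) = 0 := by
    rw [form_simpleRoot_both, cartanEntry_nonadj hne hnadj]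
  have h0' : cartanForm G (simpleRoot m) (simpleRoot k) = 0 := by
    rw [form_symm]; exact h0
  unfold simpleReflection
  rw [form_sub_right, form_sub_right, form_smul_right, form_smul_right, h0, h0']
  ext x
  simp only [Pi.sub_apply, Pi.smul_apply, smul_eq_mul]
  ring

/-! ### Integrality -/

/-- Integer-valued vectors. -/
def IsZVec (v : I → ℝ) : Prop := ∀ i, ∃ n : ℤ, v i = n

open Classical in
/-- Integer version of the Cartan matrix. -/
noncomputable def intEntry (G : SimpleGraph I) (i j : I) : ℤ :=
  if i = j then 2 else if G.Adj i j then -1 else 0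

lemma intEntry_cast (i j : I) : ((intEntry G i j : ℤ) : ℝ) = cartanEntry G i j := by
  unfold intEntry cartanEntry
  split_ifs <;> norm_num

lemma intEntry_self (i : I) : intEntry G i i = 2 := by simp [intEntry]

lemma intEntry_symm (i j : I) : intEntry G i j = intEntry G j i := by
  unfold intEntry
  by_cases h : i = j
  · subst h; simp
  · rw [if_neg h, if_neg (Ne.symm h)]
    by_cases ha : G.Adj i j
    · rw [if_pos ha, if_pos ha.symm]
    · rw [if_neg ha, if_neg fun h' => ha h'.symm]

lemma isZVec_simpleRoot (i : I) : IsZVec (simpleRoot i : I → ℝ) := by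
  intro x
  unfold simpleRoot
  classical
  by_cases h : x = i
  · exact ⟨1, by simp [Pi.single_apply, h]⟩
  · exact ⟨0, by simp [Pi.single_apply, h]⟩

lemma form_int {u v : I → ℝ} (hu : IsZVec u) (hv : IsZVec v) :
    ∃ n : ℤ, cartanForm G u v = n := by
  choose gu hgu using hu
  choose gv hgv using hv
  refine ⟨∑ i, ∑ j, gu i * intEntry G i j * gv j, ?_⟩
  unfold cartanForm
  push_cast
  exact Finset.sum_congr rfl fun i _ => Finset.sum_congr rfl fun j _ => by
    rw [hgu, hgv, intEntry_cast]

lemma isZVec_reflect {v : I → ℝ} (k : I) (hv : IsZVec v) :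
    IsZVec (simpleReflection G k v) := by
  obtain ⟨n, hn⟩ := form_int (G := G) (isZVec_simpleRoot k) hv
  intro x
  obtain ⟨m, hm⟩ := hv x
  obtain ⟨s, hs⟩ := isZVec_simpleRoot k x
  refine ⟨m - n * s, ?_⟩
  unfold simpleReflection
  simp only [Pi.sub_apply, Pi.smul_apply, smul_eq_mul, hn, hm, hs]
  push_cast
  ring

lemma int_form_self_even (g : I → ℤ) :
    2 ∣ ∑ i, ∑ j, g i * intEntry G i j * g j := by
  have h : ((∑ i, ∑ j, g i * intEntry G i j * g j : ℤ) : ZMod 2) = 0 := by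
    push_cast
    rw [← Finset.sum_product']
    refine Finset.sum_involution (fun p _ => (p.2, p.1)) ?_ ?_ (fun p hp => by simp) ?_
    · intro p _
      rw [intEntry_symm p.2 p.1]
      have : ((g p.1 : ZMod 2) * (intEntry G p.1 p.2 : ZMod 2) * (g p.2 : ZMod 2)) +
          (g p.2 : ZMod 2) * (intEntry G p.1 p.2 : ZMod 2) * (g p.1 : ZMod 2) =
          ((g p.1 : ZMod 2) * (intEntry G p.1 p.2 : ZMod 2) * (g p.2 : ZMod 2)) +
          ((g p.1 : ZMod 2) * (intEntry G p.1 p.2 : ZMod 2) * (g p.2 : ZMod 2)) := by ring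
      rw [this]
      exact CharTwo.add_self_eq_zero _
    · rintro ⟨a, b⟩ _ hfp hc
      have hpp : b = a := congrArg Prod.fst hc
      apply hfp
      subst hpp
      rw [intEntry_self]
      have h2 : ((2 : ℤ) : ZMod 2) = 0 := by decide
      rw [h2, mul_zero, zero_mul]
    · intro p _; rfl
  exact_mod_cast (ZMod.intCast_zmod_eq_zero_iff_dvd _ 2).mp h

lemma form_self_even {u : I → ℝ} (hu : IsZVec u) :
    ∃ n : ℤ, cartanForm G u u = 2 * n := by
  choose g hg using hu
  obtain ⟨n, hn⟩ := int_form_self_even (G := G) g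
  refine ⟨n, ?_⟩
  have : cartanForm G u u = ((∑ i, ∑ j, g i * intEntry G i j * g j : ℤ) : ℝ) := by
    unfold cartanForm
    push_cast
    exact Finset.sum_congr rfl fun i _ => Finset.sum_congr rfl fun j _ => by
      rw [hg, hg, intEntry_cast]
  rw [this, hn]
  push_cast
  ring

end GeometricLemmas

section RootLemmas

set_option linter.unusedSectionVars false

open Finset

variable {I : Type} [Fintype I] {G : SimpleGraph I}

lemma form_zero_zero : cartanForm G (0 : I → ℝ) 0 = 0 := by
  simp [cartanForm]

lemma form_self_ge_two (hpos : ∀ v : I → ℝ, v ≠ 0 → 0 < cartanForm G v v)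
    {u : I → ℝ} (hu : IsZVec u) (hne : u ≠ 0) : 2 ≤ cartanForm G u u := by
  obtain ⟨n, hn⟩ := form_self_even (G := G) hu
  have h0 := hpos u hne
  rw [hn] at h0 ⊢
  have h1 : (0 : ℝ) < n := by linarith
  have h2 : (1 : ℤ) ≤ n := by exact_mod_cast h1
  have h3 : (1 : ℝ) ≤ n := by exact_mod_cast h2
  linarith

lemma form_cs (hpos : ∀ v : I → ℝ, v ≠ 0 → 0 < cartanForm G v v)
    {u v : I → ℝ} (hu2 : cartanForm G u u = 2) (hv2 : cartanForm G v v = 2) :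
    |cartanForm G u v| ≤ 2 ∧ (cartanForm G u v = 2 → u = v) ∧
      (cartanForm G u v = -2 → u = -v) := by
  set c := cartanForm G u v with hc
  have hxx : cartanForm G (u - (c/2) • v) (u - (c/2) • v) = 2 - c^2/2 := by
    simp only [form_sub_left, form_sub_right, form_smul_left, form_smul_right,
      hu2, hv2, form_symm v u, ← hc]
    ring
  by_cases hx : u - (c/2) • v = 0
  · have huv : u = (c/2) • v := by rwa [sub_eq_zero] at hx
    have hcc : c^2 = 4 := by
      rw [huv, form_smul_left, form_smul_right, hv2] at hu2
      nlinarith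
    have : (c - 2) * (c + 2) = 0 := by nlinarith
    rcases mul_eq_zero.mp this with h | h
    · have hc2 : c = 2 := by linarith
      have huv' : u = v := by rw [huv, hc2]; norm_num
      exact ⟨by rw [hc2]; norm_num, fun _ => huv', fun h' => by rw [hc2] at h'; norm_num at h'⟩
    · have hc2 : c = -2 := by linarith
      have huv' : u = -v := by
        rw [huv, hc2]
        ext x
        simp only [Pi.smul_apply, smul_eq_mul, Pi.neg_apply]
        ring
      exact ⟨by rw [hc2]; norm_num, fun h' => by rw [hc2] at h'; norm_num at h', fun _ => huv'⟩
  · have hpx := hpos _ hx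
    rw [hxx] at hpx
    have h4 : c^2 < 4 := by linarith
    constructor
    · rw [abs_le]; constructor <;> nlinarith
    · constructor <;> (intro h'; rw [h'] at h4; norm_num at h4)

/-- Every integer vector of norm 2 is nonnegative or nonpositive. -/
lemma zvec_pos_or_neg (hpos : ∀ v : I → ℝ, v ≠ 0 → 0 < cartanForm G v v)
    {u : I → ℝ} (hu : IsZVec u) (h2 : cartanForm G u u = 2) :
    (∀ i, 0 ≤ u i) ∨ (∀ i, u i ≤ 0) := by
  set p : I → ℝ := fun x => max (u x) 0 with hp_def
  set m : I → ℝ := fun x => max (-u x) 0 with hm_def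
  have hpnn : ∀ x, 0 ≤ p x := fun x => le_max_right _ _
  have hmnn : ∀ x, 0 ≤ m x := fun x => le_max_right _ _
  have hu' : u = p - m := by
    funext x
    simp only [Pi.sub_apply, hp_def, hm_def]
    rcases le_total (u x) 0 with h | h
    · rw [max_eq_right h, max_eq_left (by linarith)]; ring
    · rw [max_eq_left h, max_eq_right (by linarith)]; ring
  have hpz : IsZVec p := by
    intro x
    obtain ⟨n, hn⟩ := hu x
    exact ⟨max n 0, by simp only [hp_def, hn]; norm_cast⟩
  have hmz : IsZVec m := by
    intro x
    obtain ⟨n, hn⟩ := hu x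
    exact ⟨max (-n) 0, by simp only [hm_def, hn]; norm_cast⟩
  have hpm : cartanForm G p m ≤ 0 := by
    unfold cartanForm
    apply Finset.sum_nonpos
    intro i _
    apply Finset.sum_nonpos
    intro j _
    by_cases hij : i = j
    · subst hij
      have hpm0 : p i * m i = 0 := by
        rcases le_total (u i) 0 with h | h
        · rw [show p i = 0 from max_eq_right h, zero_mul]
        · rw [show m i = 0 from max_eq_right (by linarith), mul_zero]
      calc p i * cartanEntry G i i * m i = cartanEntry G i i * (p i * m i) := by ring
        _ = 0 := by rw [hpm0, mul_zero]
        _ ≤ 0 := le_refl 0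
    · have hce : cartanEntry G i j ≤ 0 := by
        unfold cartanEntry
        rw [if_neg hij]
        split_ifs <;> norm_num
      have := mul_nonneg (hpnn i) (hmnn j)
      nlinarith
  by_cases hp0 : p = 0
  · right
    intro x
    have : u x = p x - m x := by rw [hu']; rfl
    rw [hp0] at this
    simp only [Pi.zero_apply, zero_sub] at this
    rw [this]
    simpa using hmnn x
  · by_cases hm0 : m = 0
    · left
      intro x
      have : u x = p x - m x := by rw [hu']; rfl
      rw [hm0] at this
      simp only [Pi.zero_apply, sub_zero] at this
      rw [this]
      exact hpnn x
    · exfalso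
      have h1 : 2 ≤ cartanForm G p p := form_self_ge_two hpos hpz hp0
      have h2' : 2 ≤ cartanForm G m m := form_self_ge_two hpos hmz hm0
      have hexp : cartanForm G u u =
          cartanForm G p p + cartanForm G m m - 2 * cartanForm G p m := by
        rw [hu']
        simp only [form_sub_left, form_sub_right, form_symm m p]
        ring
      rw [h2] at hexp
      linarith

/-! ### Roots -/

/-- The composite reflection `σ_{k₁} ∘ ⋯ ∘ σ_{k_p}` of a word. -/
noncomputable def rhoW (G : SimpleGraph I) (w : List I) : (I → ℝ) → (I → ℝ) :=
  (w.map (simpleReflection G)).foldr (· ∘ ·) id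

lemma rhoW_nil (v : I → ℝ) : rhoW G [] v = v := rfl

lemma rhoW_cons (k : I) (w : List I) (v : I → ℝ) :
    rhoW G (k :: w) v = simpleReflection G k (rhoW G w v) := rfl

/-- Roots: images of simple roots under composites of reflections. -/
def IsRoot (G : SimpleGraph I) [Fintype I] (v : I → ℝ) : Prop :=
  ∃ w j, v = rhoW G w (simpleRoot j)

lemma isRoot_simpleRoot (j : I) : IsRoot G (simpleRoot j) := ⟨[], j, rfl⟩

lemma IsRoot.reflect {v : I → ℝ} (k : I) (h : IsRoot G v) :
    IsRoot G (simpleReflection G k v) := by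
  obtain ⟨w, j, rfl⟩ := h
  exact ⟨k :: w, j, rfl⟩

lemma IsRoot.zvec {v : I → ℝ} (h : IsRoot G v) : IsZVec v := by
  obtain ⟨w, j, rfl⟩ := h
  induction w with
  | nil => exact isZVec_simpleRoot j
  | cons k w ih => rw [rhoW_cons]; exact isZVec_reflect k ih

lemma IsRoot.norm2 {v : I → ℝ} (h : IsRoot G v) : cartanForm G v v = 2 := by
  obtain ⟨w, j, rfl⟩ := h
  induction w with
  | nil => exact form_simpleRoot_self j
  | cons k w ih => rw [rhoW_cons, form_reflect_both]; exact ih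

lemma IsRoot.ne_zero {v : I → ℝ} (h : IsRoot G v) : v ≠ 0 := by
  intro h0
  have := h.norm2
  rw [h0, form_zero_zero] at this
  norm_num at this

lemma reflect_neg (k : I) (v : I → ℝ) :
    simpleReflection G k (-v) = -simpleReflection G k v := by
  unfold simpleReflection
  rw [form_neg_right]
  ext x
  simp only [Pi.sub_apply, Pi.smul_apply, smul_eq_mul, Pi.neg_apply, neg_mul]
  ring

lemma rhoW_neg (w : List I) (v : I → ℝ) : rhoW G w (-v) = -rhoW G w v := by
  induction w with
  | nil => rfl
  | cons k w ih => rw [rhoW_cons, rhoW_cons, ih, reflect_neg]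

lemma rhoW_append (w w' : List I) (v : I → ℝ) :
    rhoW G (w ++ w') v = rhoW G w (rhoW G w' v) := by
  induction w with
  | nil => rfl
  | cons k w ih => rw [List.cons_append, rhoW_cons, rhoW_cons, ih]

lemma IsRoot.neg {v : I → ℝ} (h : IsRoot G v) : IsRoot G (-v) := by
  obtain ⟨w, j, rfl⟩ := h
  refine ⟨w ++ [j], j, ?_⟩
  rw [rhoW_append, show rhoW G [j] (simpleRoot j) = -simpleRoot j from by
    rw [show rhoW G [j] (simpleRoot j) = simpleReflection G j (simpleRoot j) from rfl,
      reflect_simpleRoot_self], rhoW_neg]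

/-- Positive roots. -/
def IsPR (G : SimpleGraph I) [Fintype I] (v : I → ℝ) : Prop :=
  IsRoot G v ∧ ∀ i, 0 ≤ v i

lemma simpleRoot_nonneg (j x : I) : 0 ≤ simpleRoot j x := by
  classical
  simp only [simpleRoot, Pi.single_apply]
  split_ifs <;> norm_num

lemma isPR_simpleRoot (j : I) : IsPR G (simpleRoot j) :=
  ⟨isRoot_simpleRoot j, simpleRoot_nonneg j⟩

lemma simpleRoot_apply_self (j : I) : simpleRoot j j = (1 : ℝ) := by
  classical
  simp [simpleRoot, Pi.single_apply]

lemma simpleRoot_apply_ne {j x : I} (h : x ≠ j) : simpleRoot j x = (0 : ℝ) := by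
  classical
  simp [simpleRoot, Pi.single_apply, h]

lemma simpleRoot_injective {i j : I} (h : simpleRoot i = (simpleRoot j : I → ℝ)) :
    i = j := by
  by_contra hne
  have := congrFun h i
  rw [simpleRoot_apply_self, simpleRoot_apply_ne (Ne.symm ?_)] at this
  · norm_num at this
  · exact fun h' => hne h'.symm

lemma root_pos_or_neg (hpos : ∀ v : I → ℝ, v ≠ 0 → 0 < cartanForm G v v)
    {v : I → ℝ} (h : IsRoot G v) : IsPR G v ∨ IsPR G (-v) := by
  rcases zvec_pos_or_neg hpos h.zvec h.norm2 with hp | hn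
  · exact Or.inl ⟨h, hp⟩
  · exact Or.inr ⟨h.neg, fun i => by simpa using hn i⟩

/-! ### Heights -/

/-- The (real) height of a vector: the sum of its coordinates. -/
noncomputable def htR (v : I → ℝ) : ℝ := ∑ i, v i

/-- The height as a natural number. -/
noncomputable def htN (v : I → ℝ) : ℕ := (⌊htR v⌋).toNat

lemma htR_int {v : I → ℝ} (hz : IsZVec v) : ∃ n : ℤ, htR v = n := by
  choose g hg using hz
  exact ⟨∑ i, g i, by unfold htR; rw [Int.cast_sum]; exact Finset.sum_congr rfl fun i _ => hg i⟩

lemma htN_cast {v : I → ℝ} (hz : IsZVec v) (hnn : ∀ i, 0 ≤ v i) :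
    ((htN v : ℕ) : ℝ) = htR v := by
  obtain ⟨n, hn⟩ := htR_int hz
  have hnng : 0 ≤ htR v := Finset.sum_nonneg fun i _ => hnn i
  unfold htN
  rw [hn, Int.floor_intCast]
  have h0 : (0 : ℤ) ≤ n := by exact_mod_cast hn ▸ hnng
  have := Int.toNat_of_nonneg h0
  exact_mod_cast congrArg (fun z : ℤ => (z : ℝ)) this

lemma sum_simpleRoot (k : I) : ∑ x, simpleRoot k x = (1 : ℝ) := by
  classical
  simp [simpleRoot, Pi.single_apply]

lemma htR_reflect (k : I) (v : I → ℝ) :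
    htR (simpleReflection G k v) = htR v - cartanForm G (simpleRoot k) v := by
  unfold htR simpleReflection
  simp only [Pi.sub_apply, Pi.smul_apply, smul_eq_mul]
  rw [Finset.sum_sub_distrib, ← Finset.mul_sum, sum_simpleRoot, mul_one]

lemma IsPR.htR_ge_one {v : I → ℝ} (h : IsPR G v) : 1 ≤ htR v := by
  obtain ⟨n, hn⟩ := htR_int h.1.zvec
  have hnng : 0 ≤ htR v := Finset.sum_nonneg fun i _ => h.2 i
  have hne : htR v ≠ 0 := by
    intro h0
    apply h.1.ne_zero
    funext x
    have := (Finset.sum_eq_zero_iff_of_nonneg fun i _ => h.2 i).mp h0 x (Finset.mem_univ x)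
    simpa using this
  have h1 : (0 : ℤ) < n := by
    have : (0:ℝ) < htR v := lt_of_le_of_ne hnng (Ne.symm hne)
    rw [hn] at this
    exact_mod_cast this
  rw [hn]
  exact_mod_cast h1

lemma IsPR.htN_ge_one {v : I → ℝ} (h : IsPR G v) : 1 ≤ htN v := by
  have hc := htN_cast h.1.zvec h.2
  have h1 := h.htR_ge_one
  by_contra hlt
  push_neg at hlt
  have h0 : htN v = 0 := by omega
  rw [h0] at hc
  simp at hc
  linarith

/-! ### Descents -/

lemma descent_exists (hpos : ∀ v : I → ℝ, v ≠ 0 → 0 < cartanForm G v v)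
    {γ : I → ℝ} (hγ : IsPR G γ) :
    (∃ k, γ = simpleRoot k) ∨ (∃ k, cartanForm G (simpleRoot k) γ = 1) := by
  have h2 := hγ.1.norm2
  have hk : ∃ k, 0 < cartanForm G (simpleRoot k) γ := by
    by_contra hc
    push_neg at hc
    have : cartanForm G γ γ ≤ 0 := by
      rw [form_eq_sum]
      exact Finset.sum_nonpos fun k _ => mul_nonpos_of_nonneg_of_nonpos (hγ.2 k) (hc k)
    linarith
  obtain ⟨k, hk⟩ := hk
  obtain ⟨n, hn⟩ := form_int (G := G) (isZVec_simpleRoot k) hγ.1.zvec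
  have hcs := form_cs hpos (form_simpleRoot_self (G := G) k) h2
  have habs : |(n : ℝ)| ≤ 2 := hn ▸ hcs.1
  have habs' : |n| ≤ 2 := by exact_mod_cast habs
  have hpos' : 0 < n := by rw [hn] at hk; exact_mod_cast hk
  have hb := abs_le.mp habs'
  have : n = 1 ∨ n = 2 := by omega
  rcases this with h1 | h1
  · exact Or.inr ⟨k, by rw [hn, h1]; norm_num⟩
  · left
    refine ⟨k, ?_⟩
    have : simpleRoot k = γ := hcs.2.1 (by rw [hn, h1]; norm_num)
    exact this.symm

lemma isPR_reflect_of_nonpos {γ : I → ℝ} (hγ : IsPR G γ) {k : I}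
    (hc : cartanForm G (simpleRoot k) γ ≤ 0) : IsPR G (simpleReflection G k γ) := by
  refine ⟨hγ.1.reflect k, fun i => ?_⟩
  have h1 : simpleReflection G k γ i = γ i - cartanForm G (simpleRoot k) γ * simpleRoot k i := rfl
  rw [h1]
  have := simpleRoot_nonneg k i
  nlinarith [hγ.2 i]

lemma isPR_reflect_of_ne (hpos : ∀ v : I → ℝ, v ≠ 0 → 0 < cartanForm G v v)
    {γ : I → ℝ} (hγ : IsPR G γ) {k : I} (hne : γ ≠ simpleRoot k) :
    IsPR G (simpleReflection G k γ) := by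
  rcases root_pos_or_neg hpos (hγ.1.reflect k) with h | h
  · exact h
  · exfalso
    have hzero : ∀ i, i ≠ k → γ i = 0 := by
      intro i hik
      have h1 : simpleReflection G k γ i =
          γ i - cartanForm G (simpleRoot k) γ * simpleRoot k i := rfl
      have h2 : simpleReflection G k γ i ≤ 0 := by
        have := h.2 i
        simpa using this
      rw [h1, simpleRoot_apply_ne hik, mul_zero, sub_zero] at h2
      exact le_antisymm h2 (hγ.2 i)
    have hγk : γ = γ k • simpleRoot k := by
      funext x
      by_cases hx : x = k
      · subst hx
        simp [simpleRoot_apply_self]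
      · rw [hzero x hx]
        simp [simpleRoot_apply_ne hx]
    have hn2 := hγ.1.norm2
    rw [hγk, form_smul_left, form_smul_right, form_simpleRoot_self] at hn2
    have : γ k = 1 ∨ γ k = -1 := by
      have h4 : (γ k - 1) * (γ k + 1) = 0 := by nlinarith
      rcases mul_eq_zero.mp h4 with h | h
      · left; linarith
      · right; linarith
    rcases this with h1 | h1
    · apply hne
      rw [hγk, h1, one_smul]
    · have := hγ.2 k
      rw [h1] at this
      norm_num at this

lemma root_form_cases (hpos : ∀ v : I → ℝ, v ≠ 0 → 0 < cartanForm G v v)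
    {u v : I → ℝ} (hu : IsRoot G u) (hv : IsRoot G v) :
    cartanForm G u v = -2 ∨ cartanForm G u v = -1 ∨ cartanForm G u v = 0 ∨
      cartanForm G u v = 1 ∨ cartanForm G u v = 2 := by
  obtain ⟨n, hn⟩ := form_int (G := G) hu.zvec hv.zvec
  have habs : |(n : ℝ)| ≤ 2 := hn ▸ (form_cs hpos hu.norm2 hv.norm2).1
  have habs' : |n| ≤ 2 := by exact_mod_cast habs
  have hb := abs_le.mp habs'
  have : n = -2 ∨ n = -1 ∨ n = 0 ∨ n = 1 ∨ n = 2 := by omega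
  rcases this with h | h | h | h | h <;> rw [hn, h] <;> norm_num

lemma root_form_eq_two (hpos : ∀ v : I → ℝ, v ≠ 0 → 0 < cartanForm G v v)
    {u v : I → ℝ} (hu : IsRoot G u) (hv : IsRoot G v)
    (h : cartanForm G u v = 2) : u = v :=
  (form_cs hpos hu.norm2 hv.norm2).2.1 h

end RootLemmas

namespace BrauerMonoid

section Ecan

set_option linter.unusedSectionVars false
set_option maxHeartbeats 1000000

open Finset

variable {I : Type} [Fintype I] {G : SimpleGraph I}

lemma conj_mul (k : I) (x y : BrauerMonoid G) :
    R G k * (x * y) * R G k = (R G k * x * R G k) * (R G k * y * R G k) := by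
  simp only [← mul_assoc]
  rw [r_r' (R G k * x) k]

lemma conj_conj (k : I) (x : BrauerMonoid G) :
    R G k * (R G k * x * R G k) * R G k = x := by
  simp only [← mul_assoc]
  rw [r_r (G := G) k, one_mul, r_r']

lemma form_simple_reflect (i k : I) (γ : I → ℝ) :
    cartanForm G (simpleRoot i) (simpleReflection G k γ) =
      cartanForm G (simpleRoot i) γ -
        cartanForm G (simpleRoot k) γ * cartanEntry G i k := by
  rw [form_reflect_right, form_simpleRoot_both]

/-- Auxiliary recursion for the canonical `E`-element of a positive root. -/
noncomputable def EcanAux (G : SimpleGraph I) [Fintype I] :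
    ℕ → (I → ℝ) → BrauerMonoid G
  | 0, _ => 1
  | n + 1, γ =>
    if h : ∃ k, γ = simpleRoot k then E G h.choose
    else if h2 : ∃ k, cartanForm G (simpleRoot k) γ = 1 then
      R G h2.choose * EcanAux G n (simpleReflection G h2.choose γ) * R G h2.choose
    else 1

lemma EcanAux_succ (n : ℕ) (γ : I → ℝ) :
    EcanAux G (n + 1) γ =
      if h : ∃ k, γ = simpleRoot k then E G h.choose
      else if h2 : ∃ k, cartanForm G (simpleRoot k) γ = 1 then
        R G h2.choose * EcanAux G n (simpleReflection G h2.choose γ) * R G h2.choose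
      else 1 := rfl

/-- The canonical `E`-element attached to a positive root. -/
noncomputable def Ecan (G : SimpleGraph I) [Fintype I] (γ : I → ℝ) :
    BrauerMonoid G :=
  EcanAux G (htN γ) γ

lemma htN_simpleRoot (j : I) : htN (simpleRoot j : I → ℝ) = 1 := by
  unfold htN
  rw [show htR (simpleRoot j : I → ℝ) = 1 from sum_simpleRoot j]
  norm_num

lemma Ecan_simple (j : I) : Ecan G (simpleRoot j) = E G j := by
  unfold Ecan
  rw [htN_simpleRoot]
  rw [show (1:ℕ) = 0 + 1 from rfl, EcanAux_succ]
  have h : ∃ k, (simpleRoot j : I → ℝ) = simpleRoot k := ⟨j, rfl⟩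
  rw [dif_pos h]
  have := h.choose_spec
  rw [← simpleRoot_injective this]

lemma Ecan_step (hpos : ∀ v : I → ℝ, v ≠ 0 → 0 < cartanForm G v v)
    {γ : I → ℝ} (hγ : IsPR G γ) (hns : ∀ k, γ ≠ simpleRoot k) :
    ∃ m, cartanForm G (simpleRoot m) γ = 1 ∧ IsPR G (simpleReflection G m γ) ∧
      htN γ = htN (simpleReflection G m γ) + 1 ∧
      Ecan G γ = R G m * Ecan G (simpleReflection G m γ) * R G m := by
  have h2 : ∃ k, cartanForm G (simpleRoot k) γ = 1 := by
    rcases descent_exists hpos hγ with ⟨k, hk⟩ | h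
    · exact absurd hk (hns k)
    · exact h
  have hm : cartanForm G (simpleRoot h2.choose) γ = 1 := h2.choose_spec
  have hd : IsPR G (simpleReflection G h2.choose γ) :=
    isPR_reflect_of_ne hpos hγ (hns h2.choose)
  have hhr : htR (simpleReflection G h2.choose γ) = htR γ - 1 := by
    rw [htR_reflect, hm]
  have hNd : htN γ = htN (simpleReflection G h2.choose γ) + 1 := by
    have hcast1 := htN_cast hγ.1.zvec hγ.2
    have hcast2 := htN_cast hd.1.zvec hd.2
    have : ((htN γ : ℕ) : ℝ) = ((htN (simpleReflection G h2.choose γ) : ℕ) : ℝ) + 1 := by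
      rw [hcast1, hcast2, hhr]; ring
    exact_mod_cast this
  refine ⟨h2.choose, hm, hd, hNd, ?_⟩
  unfold Ecan
  rw [hNd, EcanAux_succ, dif_neg (by push_neg; exact hns), dif_pos h2]

lemma ne_simple_of_form {γ : I → ℝ} {k : I} {c : ℝ}
    (h : cartanForm G (simpleRoot k) γ = c) (hc : c ≠ 2) : γ ≠ simpleRoot k := by
  intro he
  rw [he, form_simpleRoot_self] at h
  exact hc h.symm

lemma htN_step {γ : I → ℝ} {k : I} (hγ : IsPR G γ)
    (hd : IsPR G (simpleReflection G k γ))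
    (h1 : cartanForm G (simpleRoot k) γ = 1) :
    htN γ = htN (simpleReflection G k γ) + 1 := by
  have hcast1 := htN_cast hγ.1.zvec hγ.2
  have hcast2 := htN_cast hd.1.zvec hd.2
  have h3 : htR (simpleReflection G k γ) = htR γ - 1 := by rw [htR_reflect, h1]
  have : ((htN γ : ℕ) : ℝ) = ((htN (simpleReflection G k γ) : ℕ) : ℝ) + 1 := by
    rw [hcast1, hcast2, h3]; ring
  exact_mod_cast this

/-- Pure monoid computation: if `X` commutes with `r_m` and `k ∼ m` then `r_k`
commutes with `r_m r_k X r_k r_m`. -/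
lemma braid_conj_comm {k m : I} (hadj : G.Adj k m) {X : BrauerMonoid G}
    (hX : Commute (R G m) X) :
    Commute (R G k) (R G m * (R G k * X * R G k) * R G m) := by
  show R G k * (R G m * (R G k * X * R G k) * R G m) =
    (R G m * (R G k * X * R G k) * R G m) * R G k
  simp only [← mul_assoc]
  rw [braid hadj]
  rw [mul_assoc (R G m * R G k) (R G m) X, hX.eq]
  simp only [← mul_assoc]
  rw [mul_assoc (R G m * R G k * X) (R G m) (R G k),
    mul_assoc (R G m * R G k * X), braid hadj.symm]
  simp only [← mul_assoc]

/-- Pure monoid computation: if `r_k` and `r_m` commute then conjugation by them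
can be swapped. -/
lemma comm_conj_swap {k m : I} (h : Commute (R G k) (R G m)) (X : BrauerMonoid G) :
    R G m * (R G k * X * R G k) * R G m = R G k * (R G m * X * R G m) * R G k := by
  simp only [← mul_assoc]
  rw [← h.eq, mul_assoc (R G k * R G m * X), h.eq, ← mul_assoc]

/-- Claims (d) and (e): for a positive root `γ`,
(d) `r_k` commutes with `Ecan γ` whenever `B(α_k, γ) = 0`, and
(e) `Ecan γ = r_k Ecan(σ_k γ) r_k` whenever `B(α_k, γ) = 1`. -/
lemma de_claim (hpos : ∀ v : I → ℝ, v ≠ 0 → 0 < cartanForm G v v) :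
    ∀ n : ℕ, ∀ γ : I → ℝ, IsPR G γ → htN γ ≤ n →
    (∀ k, cartanForm G (simpleRoot k) γ = 0 → Commute (R G k) (Ecan G γ)) ∧
    (∀ k, cartanForm G (simpleRoot k) γ = 1 →
      Ecan G γ = R G k * Ecan G (simpleReflection G k γ) * R G k) := by
  intro n
  induction n using Nat.strong_induction_on with
  | _ n ih =>
  intro γ hγ hht
  by_cases hs : ∃ j, γ = simpleRoot j
  · obtain ⟨j, rfl⟩ := hs
    constructor
    · intro k hk
      rw [Ecan_simple]
      have hkj : k ≠ j := fun h => by rw [h, form_simpleRoot_self] at hk; norm_num at hk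
      have hadj : ¬ G.Adj k j := fun h => by
        rw [form_simpleRoot_both, cartanEntry_adj h] at hk; norm_num at hk
      exact (er_comm (fun h => hkj h.symm) (fun h => hadj h.symm)).symm
    · intro k hk
      exfalso
      rw [form_simpleRoot_both] at hk
      by_cases h : k = j
      · rw [h, cartanEntry_self] at hk; norm_num at hk
      · by_cases ha : G.Adj k j
        · rw [cartanEntry_adj ha] at hk; norm_num at hk
        · rw [cartanEntry_nonadj h ha] at hk; norm_num at hk
  · push_neg at hs
    obtain ⟨m, hm1, hmPR, hmN, hmE⟩ := Ecan_step hpos hγ hs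
    have hγ1 := hγ.htN_ge_one
    have hmlt : htN (simpleReflection G m γ) < n := by omega
    have ihδ := ih _ hmlt (simpleReflection G m γ) hmPR le_rfl
    constructor
    · -- claim (d)
      intro k hk
      have hkm : k ≠ m := fun h => by rw [h, hm1] at hk; norm_num at hk
      have hBkδ : cartanForm G (simpleRoot k) (simpleReflection G m γ) =
          - cartanEntry G k m := by
        rw [form_simple_reflect, hk, hm1]; ring
      by_cases hadj : G.Adj k m
      · -- adjacent case
        have hBk1 : cartanForm G (simpleRoot k) (simpleReflection G m γ) = 1 := by
          rw [hBkδ, cartanEntry_adj hadj]; norm_num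
        have hδne := ne_simple_of_form hBk1 (by norm_num)
        have hδ'PR : IsPR G (simpleReflection G k (simpleReflection G m γ)) :=
          isPR_reflect_of_ne hpos hmPR hδne
        have hEδ : Ecan G (simpleReflection G m γ) =
            R G k * Ecan G (simpleReflection G k (simpleReflection G m γ)) * R G k :=
          ihδ.2 k hBk1
        have hδ'lt : htN (simpleReflection G k (simpleReflection G m γ)) < n := by
          have := htN_step hmPR hδ'PR hBk1
          omega
        have hBmδ' : cartanForm G (simpleRoot m)
            (simpleReflection G k (simpleReflection G m γ)) = 0 := by
          rw [form_simple_reflect, hBk1, one_mul, form_simple_reflect, hm1,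
            cartanEntry_self, cartanEntry_symm m k, cartanEntry_adj hadj]
          ring
        have hcomm : Commute (R G m)
            (Ecan G (simpleReflection G k (simpleReflection G m γ))) :=
          (ih _ hδ'lt _ hδ'PR le_rfl).1 m hBmδ'
        rw [hmE, hEδ]
        exact braid_conj_comm hadj hcomm
      · -- non-adjacent case
        have hBk0 : cartanForm G (simpleRoot k) (simpleReflection G m γ) = 0 := by
          rw [hBkδ, cartanEntry_nonadj hkm hadj]; ring
        have hcomm : Commute (R G k) (Ecan G (simpleReflection G m γ)) :=
          ihδ.1 k hBk0
        rw [hmE]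
        have hrm : Commute (R G k) (R G m) := rr_comm hkm hadj
        exact (hrm.mul_right hcomm).mul_right hrm
    · -- claim (e)
      intro k hk
      by_cases hkm : k = m
      · subst hkm; exact hmE
      · have hBkδ : cartanForm G (simpleRoot k) (simpleReflection G m γ) =
            1 - cartanEntry G k m := by
          rw [form_simple_reflect, hk, hm1]; ring
        by_cases hadj : G.Adj k m
        · -- adjacent: forces γ = α_k + α_m
          have hBk2 : cartanForm G (simpleRoot k) (simpleReflection G m γ) = 2 := by
            rw [hBkδ, cartanEntry_adj hadj]; ring
          have hδk : simpleRoot k = simpleReflection G m γ :=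
            root_form_eq_two hpos (isRoot_simpleRoot k) hmPR.1 hBk2
          have hγδ : γ = simpleReflection G m (simpleReflection G m γ) :=
            (reflect_reflect m γ).symm
          have hγeq : γ = simpleRoot k + simpleRoot m := by
            conv_lhs => rw [hγδ, ← hδk]
            rw [reflect_simpleRoot_adj hadj.symm]
          have hσkγ : simpleReflection G k γ = simpleRoot m := by
            unfold simpleReflection
            rw [hk, hγeq]
            ext x
            simp only [Pi.sub_apply, Pi.add_apply, Pi.smul_apply, smul_eq_mul]
            ring
          rw [hσkγ, Ecan_simple, hmE, ← hδk, Ecan_simple]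
          exact rer hadj
        · -- non-adjacent
          have hBk1 : cartanForm G (simpleRoot k) (simpleReflection G m γ) = 1 := by
            rw [hBkδ, cartanEntry_nonadj hkm hadj]; ring
          have hδne := ne_simple_of_form hBk1 (by norm_num)
          have hδ'PR : IsPR G (simpleReflection G k (simpleReflection G m γ)) :=
            isPR_reflect_of_ne hpos hmPR hδne
          have hEδ : Ecan G (simpleReflection G m γ) =
              R G k * Ecan G (simpleReflection G k (simpleReflection G m γ)) * R G k :=
            ihδ.2 k hBk1
          -- σ k γ is a positive root of height htN γ - 1
          have hγnek := ne_simple_of_form hk (by norm_num)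
          have hσkPR : IsPR G (simpleReflection G k γ) :=
            isPR_reflect_of_ne hpos hγ hγnek
          have hσklt : htN (simpleReflection G k γ) < n := by
            have := htN_step hγ hσkPR hk
            omega
          have hBmσ : cartanForm G (simpleRoot m) (simpleReflection G k γ) = 1 := by
            rw [form_simple_reflect, hm1, hk, cartanEntry_symm m k,
              cartanEntry_nonadj hkm hadj]
            ring
          have hcr : simpleReflection G m (simpleReflection G k γ) =
              simpleReflection G k (simpleReflection G m γ) :=
            (reflect_comm hkm hadj γ).symm
          have hEσ : Ecan G (simpleReflection G k γ) =
              R G m * Ecan G (simpleReflection G k (simpleReflection G m γ)) * R G m := by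
            have := (ih _ hσklt _ hσkPR le_rfl).2 m hBmσ
            rw [this, hcr]
          rw [hmE, hEδ, hEσ]
          exact (comm_conj_swap (rr_comm hkm hadj) _)

/-! Monoid sandwich helpers. -/

lemma sandwich_comm {a r X : BrauerMonoid G} (har : a * r = r * a) (hrr : r * r = 1)
    (hIH : a * X * a = a) : a * (r * X * r) * a = a := by
  have hconj : r * a * r = a := by rw [← har, mul_assoc, hrr, mul_one]
  calc a * (r * X * r) * a = (a * r) * X * (r * a) := by simp only [mul_assoc]
    _ = (r * a) * X * (r * a) := congrArg (fun z => z * X * (r * a)) har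
    _ = (r * a) * X * (a * r) := congrArg (fun z => (r * a) * X * z) har.symm
    _ = r * (a * X * a) * r := by simp only [mul_assoc]
    _ = r * a * r := by rw [hIH]
    _ = a := hconj

lemma sandwich_mid {r X Y : BrauerMonoid G} (hmid : r * Y * r = Y)
    (hIH : X * Y * X = X) : (r * X * r) * Y * (r * X * r) = r * X * r := by
  calc (r * X * r) * Y * (r * X * r) = r * (X * (r * Y * r) * X) * r := by
        simp only [mul_assoc]
    _ = r * (X * Y * X) * r := by rw [hmid]
    _ = r * X * r := by rw [hIH]

lemma comm_sandwich {r X Y : BrauerMonoid G} (hc : Commute r X) :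
    X * (r * Y * r) * X = r * (X * Y * X) * r := by
  calc X * (r * Y * r) * X = (X * r) * Y * (r * X) := by simp only [mul_assoc]
    _ = (r * X) * Y * (r * X) := congrArg (fun z => z * Y * (r * X)) hc.eq.symm
    _ = (r * X) * Y * (X * r) := congrArg (fun z => (r * X) * Y * z) hc.eq
    _ = r * (X * Y * X) * r := by simp only [mul_assoc]

lemma conj_commute {k : I} {x y : BrauerMonoid G} (h : Commute x y) :
    Commute (R G k * x * R G k) (R G k * y * R G k) := by
  show _ = _
  rw [← conj_mul, ← conj_mul, h.eq]

lemma conj2_adj' {i m : I} (hadj : G.Adj i m) :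
    E G i = R G m * (R G i * E G m * R G i) * R G m := by
  rw [← conj2_adj hadj]
  simp only [mul_assoc]

lemma conj2_comm {i m : I} (hadj : G.Adj i m) {X : BrauerMonoid G}
    (hX : Commute (E G m) X) :
    Commute (E G i) (R G m * (R G i * X * R G i) * R G m) := by
  show _ = _
  calc E G i * (R G m * (R G i * X * R G i) * R G m)
      = (R G m * (R G i * E G m * R G i) * R G m) *
          (R G m * (R G i * X * R G i) * R G m) := by rw [← conj2_adj' hadj]
    _ = R G m * ((R G i * E G m * R G i) * (R G i * X * R G i)) * R G m := by
        rw [← conj_mul]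
    _ = R G m * (R G i * (E G m * X) * R G i) * R G m := by
        rw [conj_mul i (E G m) X]
    _ = R G m * (R G i * (X * E G m) * R G i) * R G m := by rw [hX.eq]
    _ = R G m * ((R G i * X * R G i) * (R G i * E G m * R G i)) * R G m := by
        rw [conj_mul i X (E G m)]
    _ = (R G m * (R G i * X * R G i) * R G m) *
          (R G m * (R G i * E G m * R G i) * R G m) := by rw [conj_mul]
    _ = (R G m * (R G i * X * R G i) * R G m) * E G i := by rw [← conj2_adj' hadj]

lemma conj2_sandwich {i m : I} (hadj : G.Adj i m) {X : BrauerMonoid G}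
    (hXr : Commute (R G i) X) (hIH : E G m * X * E G m = E G m) :
    E G i * (R G m * X * R G m) * E G i = E G i := by
  have hXi : R G i * X * R G i = X := by rw [hXr.eq, r_r']
  calc E G i * (R G m * X * R G m) * E G i
      = (R G m * (R G i * E G m * R G i) * R G m) * (R G m * X * R G m) *
          (R G m * (R G i * E G m * R G i) * R G m) := by rw [← conj2_adj' hadj]
    _ = R G m * ((R G i * E G m * R G i) * X) * R G m *
          (R G m * (R G i * E G m * R G i) * R G m) := by rw [← conj_mul]
    _ = R G m * (((R G i * E G m * R G i) * X) * (R G i * E G m * R G i)) * R G m := by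
        rw [← conj_mul]
    _ = R G m * ((R G i * E G m * R G i) * (R G i * X * R G i) *
          (R G i * E G m * R G i)) * R G m := by rw [hXi]
    _ = R G m * ((R G i * (E G m * X) * R G i) * (R G i * E G m * R G i)) * R G m := by
        rw [conj_mul i (E G m) X]
    _ = R G m * (R G i * (E G m * X * E G m) * R G i) * R G m := by
        rw [conj_mul i (E G m * X) (E G m)]
    _ = R G m * (R G i * E G m * R G i) * R G m := by rw [hIH]
    _ = E G i := by rw [← conj2_adj' hadj]

/-- Claim (a₁): `e_i` commutes with `Ecan γ` whenever `B(α_i, γ) = 0`. -/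
lemma ea_claim (hpos : ∀ v : I → ℝ, v ≠ 0 → 0 < cartanForm G v v) :
    ∀ n : ℕ, ∀ γ : I → ℝ, IsPR G γ → htN γ ≤ n →
    ∀ i, cartanForm G (simpleRoot i) γ = 0 → Commute (E G i) (Ecan G γ) := by
  intro n
  induction n using Nat.strong_induction_on with
  | _ n ih =>
  intro γ hγ hht i hi
  by_cases hs : ∃ j, γ = simpleRoot j
  · obtain ⟨j, rfl⟩ := hs
    rw [Ecan_simple]
    have hij : i ≠ j := fun h => by rw [h, form_simpleRoot_self] at hi; norm_num at hi
    have hadj : ¬ G.Adj i j := fun h => by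
      rw [form_simpleRoot_both, cartanEntry_adj h] at hi; norm_num at hi
    exact ee_comm hij hadj
  · push_neg at hs
    obtain ⟨m, hm1, hmPR, hmN, hmE⟩ := Ecan_step hpos hγ hs
    have hγ1 := hγ.htN_ge_one
    have hmlt : htN (simpleReflection G m γ) < n := by omega
    have him : i ≠ m := fun h => by rw [h, hm1] at hi; norm_num at hi
    have hBiδ : cartanForm G (simpleRoot i) (simpleReflection G m γ) =
        - cartanEntry G i m := by
      rw [form_simple_reflect, hi, hm1]; ring
    by_cases hadj : G.Adj i m
    · -- adjacent case
      have hBi1 : cartanForm G (simpleRoot i) (simpleReflection G m γ) = 1 := by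
        rw [hBiδ, cartanEntry_adj hadj]; norm_num
      have hδne := ne_simple_of_form hBi1 (by norm_num)
      have hδ'PR : IsPR G (simpleReflection G i (simpleReflection G m γ)) :=
        isPR_reflect_of_ne hpos hmPR hδne
      have hEδ : Ecan G (simpleReflection G m γ) =
          R G i * Ecan G (simpleReflection G i (simpleReflection G m γ)) * R G i :=
        (de_claim hpos (htN (simpleReflection G m γ)) _ hmPR le_rfl).2 i hBi1
      have hδ'lt : htN (simpleReflection G i (simpleReflection G m γ)) < n := by
        have := htN_step hmPR hδ'PR hBi1
        omega
      have hBmδ' : cartanForm G (simpleRoot m)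
          (simpleReflection G i (simpleReflection G m γ)) = 0 := by
        rw [form_simple_reflect, hBi1, one_mul, form_simple_reflect, hm1,
          cartanEntry_self, cartanEntry_symm m i, cartanEntry_adj hadj]
        ring
      have hcomm : Commute (E G m)
          (Ecan G (simpleReflection G i (simpleReflection G m γ))) :=
        ih _ hδ'lt _ hδ'PR le_rfl m hBmδ'
      rw [hmE, hEδ]
      exact conj2_comm hadj hcomm
    · -- non-adjacent case
      have hBi0 : cartanForm G (simpleRoot i) (simpleReflection G m γ) = 0 := by
        rw [hBiδ, cartanEntry_nonadj him hadj]; ring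
      have hcomm : Commute (E G i) (Ecan G (simpleReflection G m γ)) :=
        ih _ hmlt _ hmPR le_rfl i hBi0
      have hrm : Commute (E G i) (R G m) := er_comm him hadj
      rw [hmE]
      exact (hrm.mul_right hcomm).mul_right hrm

/-- Claim (b₁): `e_i (Ecan γ) e_i = e_i` whenever `B(α_i, γ) = ±1`. -/
lemma eb_claim (hpos : ∀ v : I → ℝ, v ≠ 0 → 0 < cartanForm G v v) :
    ∀ n : ℕ, ∀ γ : I → ℝ, IsPR G γ → htN γ ≤ n →
    ∀ i, (cartanForm G (simpleRoot i) γ = 1 ∨ cartanForm G (simpleRoot i) γ = -1) →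
    E G i * Ecan G γ * E G i = E G i := by
  intro n
  induction n using Nat.strong_induction_on with
  | _ n ih =>
  intro γ hγ hht i hi
  by_cases hs : ∃ j, γ = simpleRoot j
  · obtain ⟨j, rfl⟩ := hs
    rw [Ecan_simple]
    have hij : i ≠ j := by
      intro h
      rw [h, form_simpleRoot_self] at hi
      rcases hi with h' | h' <;> norm_num at h'
    have hadj : G.Adj i j := by
      by_contra hna
      rw [form_simpleRoot_both, cartanEntry_nonadj hij hna] at hi
      rcases hi with h' | h' <;> norm_num at h'
    exact eje hadj
  · push_neg at hs
    obtain ⟨m, hm1, hmPR, hmN, hmE⟩ := Ecan_step hpos hγ hs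
    have hγ1 := hγ.htN_ge_one
    have hmlt : htN (simpleReflection G m γ) < n := by omega
    rcases hi with hi1 | hin1
    · -- B(α_i, γ) = 1 : use (e) with k = i
      have hγne := ne_simple_of_form hi1 (by norm_num)
      have hσPR : IsPR G (simpleReflection G i γ) := isPR_reflect_of_ne hpos hγ hγne
      have hE : Ecan G γ = R G i * Ecan G (simpleReflection G i γ) * R G i :=
        (de_claim hpos (htN γ) γ hγ (le_refl _)).2 i hi1
      have hσlt : htN (simpleReflection G i γ) < n := by
        have := htN_step hγ hσPR hi1
        omega
      have hBiσ : cartanForm G (simpleRoot i) (simpleReflection G i γ) = -1 := by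
        rw [form_simple_reflect, hi1, cartanEntry_self]; ring
      have hIH := ih _ hσlt _ hσPR le_rfl i (Or.inr hBiσ)
      rw [hE]
      calc E G i * (R G i * Ecan G (simpleReflection G i γ) * R G i) * E G i
          = (E G i * R G i) * Ecan G (simpleReflection G i γ) * (R G i * E G i) := by
            simp only [mul_assoc]
        _ = E G i * Ecan G (simpleReflection G i γ) * (R G i * E G i) :=
            congrArg (fun z => z * Ecan G (simpleReflection G i γ) * (R G i * E G i))
              (e_r i)
        _ = E G i * Ecan G (simpleReflection G i γ) * E G i :=
            congrArg (fun z => E G i * Ecan G (simpleReflection G i γ) * z) (r_e i)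
        _ = E G i := hIH
    · -- B(α_i, γ) = -1
      have him : i ≠ m := fun h => by rw [h, hm1] at hin1; norm_num at hin1
      have hBiδ : cartanForm G (simpleRoot i) (simpleReflection G m γ) =
          -1 - cartanEntry G i m := by
        rw [form_simple_reflect, hin1, hm1]; ring
      by_cases hadj : G.Adj i m
      · -- adjacent: B(α_i, δ) = 0, B(α_m, δ) = -1
        have hBi0 : cartanForm G (simpleRoot i) (simpleReflection G m γ) = 0 := by
          rw [hBiδ, cartanEntry_adj hadj]; ring
        have hBm : cartanForm G (simpleRoot m) (simpleReflection G m γ) = -1 := by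
          rw [form_simple_reflect, hm1, cartanEntry_self]; ring
        have hIH := ih _ hmlt _ hmPR le_rfl m (Or.inr hBm)
        have hXr : Commute (R G i) (Ecan G (simpleReflection G m γ)) :=
          (de_claim hpos (htN (simpleReflection G m γ)) _ hmPR le_rfl).1 i hBi0
        rw [hmE]
        exact conj2_sandwich hadj hXr hIH
      · -- non-adjacent: B(α_i, δ) = -1
        have hBin1 : cartanForm G (simpleRoot i) (simpleReflection G m γ) = -1 := by
          rw [hBiδ, cartanEntry_nonadj him hadj]; ring
        have hIH := ih _ hmlt _ hmPR le_rfl i (Or.inr hBin1)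
        rw [hmE]
        exact sandwich_comm (er_comm him hadj) (r_r m) hIH

/-- Claim (b₂): `(Ecan β) e_m (Ecan β) = Ecan β` whenever `B(α_m, β) = ±1`. -/
lemma eb2_claim (hpos : ∀ v : I → ℝ, v ≠ 0 → 0 < cartanForm G v v) :
    ∀ n : ℕ, ∀ β : I → ℝ, IsPR G β → htN β ≤ n →
    ∀ m, (cartanForm G (simpleRoot m) β = 1 ∨ cartanForm G (simpleRoot m) β = -1) →
    Ecan G β * E G m * Ecan G β = Ecan G β := by
  intro n
  induction n using Nat.strong_induction_on with
  | _ n ih =>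
  intro β hβ hht m hm
  by_cases hs : ∃ j, β = simpleRoot j
  · obtain ⟨j, rfl⟩ := hs
    rw [Ecan_simple]
    have hjm : j ≠ m := by
      intro h
      rw [← h, form_simpleRoot_self] at hm
      rcases hm with h' | h' <;> norm_num at h'
    have hadj : G.Adj j m := by
      by_contra hna
      rw [form_simpleRoot_both, cartanEntry_nonadj (fun h => hjm h.symm)
        (fun h => hna h.symm)] at hm
      rcases hm with h' | h' <;> norm_num at h'
    exact eje hadj
  · push_neg at hs
    obtain ⟨k, hk1, hkPR, hkN, hkE⟩ := Ecan_step hpos hβ hs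
    have hβ1 := hβ.htN_ge_one
    have hklt : htN (simpleReflection G k β) < n := by omega
    by_cases hkm : k = m
    · -- k = m : B(α_m, β') = B(α_m, β) - 2
      subst hkm
      have hBm'' : cartanForm G (simpleRoot k) (simpleReflection G k β) = -1 := by
        rw [form_simple_reflect, hk1, cartanEntry_self]; ring
      have hIH := ih _ hklt _ hkPR le_rfl k (Or.inr hBm'')
      have hmid : R G k * E G k * R G k = E G k := by rw [r_e, e_r]
      rw [hkE]
      exact sandwich_mid hmid hIH
    · by_cases hadj : G.Adj k m
      · -- adjacent
        have hBmβ' : cartanForm G (simpleRoot m) (simpleReflection G k β) =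
            cartanForm G (simpleRoot m) β + 1 := by
          rw [form_simple_reflect, hk1, cartanEntry_symm m k, cartanEntry_adj hadj]
          ring
        rcases hm with hm1' | hmn1
        · -- B(α_m, β) = 1 : forces β' = α_m
          have hBm2 : cartanForm G (simpleRoot m) (simpleReflection G k β) = 2 := by
            rw [hBmβ', hm1']; ring
          have hβ'm : simpleRoot m = simpleReflection G k β :=
            root_form_eq_two hpos (isRoot_simpleRoot m) hkPR.1 hBm2
          rw [hkE, ← hβ'm, Ecan_simple]
          -- goal : (r_k e_m r_k) e_m (r_k e_m r_k) = r_k e_m r_k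
          have hrer : R G k * E G m * R G k = R G m * E G k * R G m := rer hadj.symm
          calc (R G k * E G m * R G k) * E G m * (R G k * E G m * R G k)
              = R G k * E G m * (R G k * E G m * R G k) * E G m * R G k := by
                simp only [mul_assoc]
            _ = R G k * E G m * (R G m * E G k * R G m) * E G m * R G k := by rw [hrer]
            _ = R G k * (E G m * R G m) * E G k * (R G m * E G m) * R G k := by
                simp only [mul_assoc]
            _ = R G k * E G m * E G k * (R G m * E G m) * R G k :=
                congrArg (fun z => R G k * z * E G k * (R G m * E G m) * R G k) (e_r m)
            _ = R G k * E G m * E G k * E G m * R G k :=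
                congrArg (fun z => R G k * E G m * E G k * z * R G k) (r_e m)
            _ = R G k * (E G m * E G k * E G m) * R G k := by simp only [mul_assoc]
            _ = R G k * E G m * R G k := by rw [eje hadj.symm]
        · -- B(α_m, β) = -1 : B(α_m, β') = 0, B(α_k, β') = -1
          have hBm0 : cartanForm G (simpleRoot m) (simpleReflection G k β) = 0 := by
            rw [hBmβ', hmn1]; ring
          have hBk' : cartanForm G (simpleRoot k) (simpleReflection G k β) = -1 := by
            rw [form_simple_reflect, hk1, cartanEntry_self]; ring
          have hIH := ih _ hklt _ hkPR le_rfl k (Or.inr hBk')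
          have hXm : Commute (R G m) (Ecan G (simpleReflection G k β)) :=
            (de_claim hpos (htN (simpleReflection G k β)) _ hkPR le_rfl).1 m hBm0
          have hrer : R G k * E G m * R G k = R G m * E G k * R G m := rer hadj.symm
          rw [hkE]
          calc (R G k * Ecan G (simpleReflection G k β) * R G k) * E G m *
                (R G k * Ecan G (simpleReflection G k β) * R G k)
              = R G k * (Ecan G (simpleReflection G k β) * (R G k * E G m * R G k) *
                  Ecan G (simpleReflection G k β)) * R G k := by simp only [mul_assoc]
            _ = R G k * (Ecan G (simpleReflection G k β) * (R G m * E G k * R G m) *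
                  Ecan G (simpleReflection G k β)) * R G k := by rw [hrer]
            _ = R G k * (R G m * (Ecan G (simpleReflection G k β) * E G k *
                  Ecan G (simpleReflection G k β)) * R G m) * R G k := by
                rw [comm_sandwich hXm]
            _ = R G k * (R G m * Ecan G (simpleReflection G k β) * R G m) * R G k := by
                rw [hIH]
            _ = R G k * Ecan G (simpleReflection G k β) * R G k := by
                rw [show R G m * Ecan G (simpleReflection G k β) * R G m =
                  Ecan G (simpleReflection G k β) from by rw [hXm.eq, r_r']]
      · -- non-adjacent : B(α_m, β') = B(α_m, β)
        have hBmβ' : cartanForm G (simpleRoot m) (simpleReflection G k β) =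
            cartanForm G (simpleRoot m) β := by
          rw [form_simple_reflect, hk1, cartanEntry_symm m k,
            cartanEntry_nonadj hkm hadj]
          ring
        have hIH := ih _ hklt _ hkPR le_rfl m (by rw [hBmβ']; exact hm)
        have hmid : R G k * E G m * R G k = E G m :=
          conj_nonadj (fun h => hkm h.symm) (fun h => hadj h.symm)
        rw [hkE]
        exact sandwich_mid hmid hIH

/-- Claim (A): canonical elements of orthogonal positive roots commute. -/
lemma EA_claim (hpos : ∀ v : I → ℝ, v ≠ 0 → 0 < cartanForm G v v) :
    ∀ n : ℕ, ∀ β : I → ℝ, IsPR G β → htN β ≤ n →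
    ∀ γ : I → ℝ, IsPR G γ → cartanForm G β γ = 0 →
    Commute (Ecan G β) (Ecan G γ) := by
  intro n
  induction n using Nat.strong_induction_on with
  | _ n ih =>
  intro β hβ hht γ hγ h0
  by_cases hs : ∃ i, β = simpleRoot i
  · obtain ⟨i, rfl⟩ := hs
    rw [Ecan_simple]
    exact ea_claim hpos (htN γ) γ hγ le_rfl i h0
  · push_neg at hs
    obtain ⟨m, hm1, hmPR, hmN, hmE⟩ := Ecan_step hpos hβ hs
    have hβ1 := hβ.htN_ge_one
    have hmlt : htN (simpleReflection G m β) < n := by omega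
    have hBβ' : cartanForm G (simpleReflection G m β) γ =
        - cartanForm G (simpleRoot m) γ := by
      rw [form_reflect_left, hm1, h0]; ring
    rcases root_form_cases hpos (isRoot_simpleRoot m) hγ.1 with hc | hc | hc | hc | hc
    · -- B(α_m, γ) = -2 : impossible
      exfalso
      have hneg := (form_cs hpos (form_simpleRoot_self (G := G) m) hγ.1.norm2).2.2 hc
      have hq := congrFun hneg m
      rw [simpleRoot_apply_self] at hq
      have := hγ.2 m
      rw [show (-γ) m = -γ m from rfl] at hq
      linarith
    · -- B(α_m, γ) = -1
      have hγs : IsPR G (simpleReflection G m γ) :=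
        isPR_reflect_of_nonpos hγ (by rw [hc]; norm_num)
      have hBs : cartanForm G (simpleRoot m) (simpleReflection G m γ) = 1 := by
        rw [form_simple_reflect, hc, cartanEntry_self]; ring
      have hEγs : Ecan G (simpleReflection G m γ) = R G m * Ecan G γ * R G m := by
        have := (de_claim hpos (htN (simpleReflection G m γ)) _ hγs le_rfl).2 m hBs
        rwa [reflect_reflect] at this
      have hB' : cartanForm G (simpleReflection G m β) (simpleReflection G m γ) = 0 := by
        rw [form_reflect_both]; exact h0
      have hIH := ih _ hmlt _ hmPR le_rfl _ hγs hB'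
      have hcc := conj_commute (k := m) hIH
      rw [hEγs, conj_conj] at hcc
      rw [hmE]
      exact hcc
    · -- B(α_m, γ) = 0
      have hcm : Commute (R G m) (Ecan G γ) :=
        (de_claim hpos (htN γ) γ hγ le_rfl).1 m hc
      have hB' : cartanForm G (simpleReflection G m β) γ = 0 := by
        rw [hBβ', hc]; ring
      have hIH := ih _ hmlt _ hmPR le_rfl γ hγ hB'
      rw [hmE]
      exact (hcm.mul_left hIH).mul_left hcm
    · -- B(α_m, γ) = 1
      have hγnem := ne_simple_of_form hc (by norm_num)
      have hγs := isPR_reflect_of_ne hpos hγ hγnem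
      have hEγ : Ecan G γ = R G m * Ecan G (simpleReflection G m γ) * R G m :=
        (de_claim hpos (htN γ) γ hγ le_rfl).2 m hc
      have hB' : cartanForm G (simpleReflection G m β) (simpleReflection G m γ) = 0 := by
        rw [form_reflect_both]; exact h0
      have hIH := ih _ hmlt _ hmPR le_rfl _ hγs hB'
      rw [hmE, hEγ]
      exact conj_commute hIH
    · -- B(α_m, γ) = 2 : γ = α_m, contradiction
      exfalso
      have hγm : simpleRoot m = γ :=
        root_form_eq_two hpos (isRoot_simpleRoot m) hγ.1 hc
      rw [← hγm, form_symm] at h0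
      rw [h0] at hm1
      norm_num at hm1

/-- Claim (B): `Ecan β · Ecan γ · Ecan β = Ecan β` when `B(β,γ) = ±1`. -/
lemma EB_claim (hpos : ∀ v : I → ℝ, v ≠ 0 → 0 < cartanForm G v v) :
    ∀ n : ℕ, ∀ β : I → ℝ, IsPR G β → htN β ≤ n →
    ∀ γ : I → ℝ, IsPR G γ →
    (cartanForm G β γ = 1 ∨ cartanForm G β γ = -1) →
    Ecan G β * Ecan G γ * Ecan G β = Ecan G β := by
  intro n
  induction n using Nat.strong_induction_on with
  | _ n ih =>
  intro β hβ hht γ hγ h1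
  by_cases hs : ∃ i, β = simpleRoot i
  · obtain ⟨i, rfl⟩ := hs
    rw [Ecan_simple]
    exact eb_claim hpos (htN γ) γ hγ le_rfl i h1
  · push_neg at hs
    obtain ⟨m, hm1, hmPR, hmN, hmE⟩ := Ecan_step hpos hβ hs
    have hβ1 := hβ.htN_ge_one
    have hmlt : htN (simpleReflection G m β) < n := by omega
    have hBβ' : cartanForm G (simpleReflection G m β) γ =
        cartanForm G β γ - cartanForm G (simpleRoot m) γ := by
      rw [form_reflect_left, hm1]; ring
    rcases root_form_cases hpos (isRoot_simpleRoot m) hγ.1 with hc | hc | hc | hc | hc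
    · -- B(α_m, γ) = -2 : impossible
      exfalso
      have hneg := (form_cs hpos (form_simpleRoot_self (G := G) m) hγ.1.norm2).2.2 hc
      have hq := congrFun hneg m
      rw [simpleRoot_apply_self] at hq
      have := hγ.2 m
      rw [show (-γ) m = -γ m from rfl] at hq
      linarith
    · -- B(α_m, γ) = -1
      have hγs : IsPR G (simpleReflection G m γ) :=
        isPR_reflect_of_nonpos hγ (by rw [hc]; norm_num)
      have hBs : cartanForm G (simpleRoot m) (simpleReflection G m γ) = 1 := by
        rw [form_simple_reflect, hc, cartanEntry_self]; ring
      have hEγs : Ecan G (simpleReflection G m γ) = R G m * Ecan G γ * R G m := by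
        have := (de_claim hpos (htN (simpleReflection G m γ)) _ hγs le_rfl).2 m hBs
        rwa [reflect_reflect] at this
      have hEγ : Ecan G γ = R G m * Ecan G (simpleReflection G m γ) * R G m := by
        rw [hEγs]
        exact (conj_conj m _).symm
      have hIH := ih _ hmlt _ hmPR le_rfl _ hγs
        (by rw [form_reflect_both]; exact h1)
      rw [hmE, hEγ, ← conj_mul, ← conj_mul, hIH]
    · -- B(α_m, γ) = 0
      have hcm : Commute (R G m) (Ecan G γ) :=
        (de_claim hpos (htN γ) γ hγ le_rfl).1 m hc
      have hmid : R G m * Ecan G γ * R G m = Ecan G γ := by rw [hcm.eq, r_r']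
      have hIH := ih _ hmlt _ hmPR le_rfl γ hγ (by rw [hBβ', hc]; simpa using h1)
      rw [hmE]
      exact sandwich_mid hmid hIH
    · -- B(α_m, γ) = 1
      have hγnem := ne_simple_of_form hc (by norm_num)
      have hγs := isPR_reflect_of_ne hpos hγ hγnem
      have hEγ : Ecan G γ = R G m * Ecan G (simpleReflection G m γ) * R G m :=
        (de_claim hpos (htN γ) γ hγ le_rfl).2 m hc
      have hIH := ih _ hmlt _ hmPR le_rfl _ hγs
        (by rw [form_reflect_both]; exact h1)
      rw [hmE, hEγ, ← conj_mul, ← conj_mul, hIH]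
    · -- B(α_m, γ) = 2 : γ = α_m
      have hγm : simpleRoot m = γ :=
        root_form_eq_two hpos (isRoot_simpleRoot m) hγ.1 hc
      rw [← hγm, Ecan_simple]
      exact eb2_claim hpos n β hβ hht m (Or.inl hm1)

/-- Word independence: any word expression for `±γ` yields `Ecan γ`. -/
lemma C1_claim (hpos : ∀ v : I → ℝ, v ≠ 0 → 0 < cartanForm G v v) :
    ∀ w : List I, ∀ j : I, ∀ γ : I → ℝ, IsPR G γ →
    (rhoW G w (simpleRoot j) = γ ∨ rhoW G w (simpleRoot j) = -γ) →
    Ew (G := G) w j = Ecan G γ := by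
  intro w
  induction w with
  | nil =>
    intro j γ hγ h
    rcases h with h | h
    · rw [rhoW_nil] at h
      rw [Ew_nil, ← h, Ecan_simple]
    · exfalso
      rw [rhoW_nil] at h
      have hq := congrFun h j
      rw [simpleRoot_apply_self] at hq
      have := hγ.2 j
      rw [show (-γ) j = -γ j from rfl] at hq
      linarith
  | cons k w ih =>
    intro j γ hγ h
    have hw : rhoW G w (simpleRoot j) = simpleReflection G k γ ∨
        rhoW G w (simpleRoot j) = -(simpleReflection G k γ) := by
      rcases h with h | h
      · left
        have h2 := congrArg (simpleReflection G k) h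
        rw [rhoW_cons, reflect_reflect] at h2
        exact h2
      · right
        have h2 := congrArg (simpleReflection G k) h
        rw [rhoW_cons, reflect_reflect, reflect_neg] at h2
        exact h2
    rw [Ew_cons]
    rcases root_form_cases hpos (isRoot_simpleRoot k) hγ.1 with hc | hc | hc | hc | hc
    · -- B(α_k, γ) = -2 : impossible
      exfalso
      have hneg := (form_cs hpos (form_simpleRoot_self (G := G) k) hγ.1.norm2).2.2 hc
      have hq := congrFun hneg k
      rw [simpleRoot_apply_self] at hq
      have := hγ.2 k
      rw [show (-γ) k = -γ k from rfl] at hq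
      linarith
    · -- B(α_k, γ) = -1
      have hγs : IsPR G (simpleReflection G k γ) :=
        isPR_reflect_of_nonpos hγ (by rw [hc]; norm_num)
      have hIH := ih j (simpleReflection G k γ) hγs hw
      have hBs : cartanForm G (simpleRoot k) (simpleReflection G k γ) = 1 := by
        rw [form_simple_reflect, hc, cartanEntry_self]; ring
      have hEγs : Ecan G (simpleReflection G k γ) = R G k * Ecan G γ * R G k := by
        have := (de_claim hpos (htN (simpleReflection G k γ)) _ hγs le_rfl).2 k hBs
        rwa [reflect_reflect] at this
      rw [hIH, hEγs, conj_conj]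
    · -- B(α_k, γ) = 0
      have hfix : simpleReflection G k γ = γ := reflect_of_orth hc
      have hIH := ih j γ hγ (by rwa [hfix] at hw)
      have hcm := (de_claim hpos (htN γ) γ hγ le_rfl).1 k hc
      rw [hIH, hcm.eq, r_r']
    · -- B(α_k, γ) = 1
      have hγnek := ne_simple_of_form hc (by norm_num)
      have hγs := isPR_reflect_of_ne hpos hγ hγnek
      have hIH := ih j _ hγs hw
      have hEγ := (de_claim hpos (htN γ) γ hγ le_rfl).2 k hc
      rw [hIH, ← hEγ]
    · -- B(α_k, γ) = 2 : γ = α_k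
      have hγk : simpleRoot k = γ :=
        root_form_eq_two hpos (isRoot_simpleRoot k) hγ.1 hc
      have hre : simpleReflection G k γ = -γ := by
        rw [← hγk, reflect_simpleRoot_self, hγk]
      have hw' : rhoW G w (simpleRoot j) = γ ∨ rhoW G w (simpleRoot j) = -γ := by
        rcases hw with h' | h'
        · right; rw [h', hre]
        · left; rw [h', hre, neg_neg]
      have hIH := ih j γ hγ hw'
      rw [hIH, ← hγk, Ecan_simple, r_e, e_r]

end Ecan

end BrauerMonoid




open BrauerMonoid in
/-- Relations among the elements `e_β = w e_i w⁻¹` of the Brauer monoid attached to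
positive roots: with `β = σ_{i₁} ⋯ σ_{i_p}(α_i)`, `γ = σ_{j₁} ⋯ σ_{j_q}(α_j)`,
`E_β = r_{i₁} ⋯ r_{i_p} e_i r_{i_p} ⋯ r_{i₁}` and
`E_γ = r_{j₁} ⋯ r_{j_q} e_j r_{j_q} ⋯ r_{j₁}`:
(a) if `B(β, γ) = 0` then `E_β E_γ = E_γ E_β`; (b) if `|B(β, γ)| = 1` then
`E_β E_γ E_β = E_β`. -/
theorem e_root_relations {I : Type} [Fintype I] (G : SimpleGraph I)
    (hpos : ∀ v : I → ℝ, v ≠ 0 → 0 < cartanForm G v v)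
    (l₁ l₂ : List I) (i j : I)
    (β γ : I → ℝ)
    (hβ : β = (l₁.map (simpleReflection G)).foldr (· ∘ ·) id (simpleRoot i))
    (hγ : γ = (l₂.map (simpleReflection G)).foldr (· ∘ ·) id (simpleRoot j))
    (Eβ Eγ : BrauerMonoid G)
    (hEβ : Eβ = (l₁.map (R G)).prod * E G i * (l₁.reverse.map (R G)).prod)
    (hEγ : Eγ = (l₂.map (R G)).prod * E G j * (l₂.reverse.map (R G)).prod) :
    (cartanForm G β γ = 0 → Eβ * Eγ = Eγ * Eβ) ∧
    (|cartanForm G β γ| = 1 → Eβ * Eγ * Eβ = Eβ) := by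
  have hEβ' : Eβ = Ew (G := G) l₁ i := by rw [hEβ]; rfl
  have hEγ' : Eγ = Ew (G := G) l₂ j := by rw [hEγ]; rfl
  have hβr : IsRoot G β := ⟨l₁, i, hβ⟩
  have hγr : IsRoot G γ := ⟨l₂, j, hγ⟩
  obtain ⟨βh, hβhP, hβe, hβE⟩ : ∃ b, IsPR G b ∧ (β = b ∨ β = -b) ∧
      Ew (G := G) l₁ i = BrauerMonoid.Ecan G b := by
    rcases root_pos_or_neg hpos hβr with h | h
    · exact ⟨β, h, Or.inl rfl, BrauerMonoid.C1_claim hpos l₁ i β h (Or.inl hβ.symm)⟩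
    · exact ⟨-β, h, Or.inr (neg_neg β).symm,
        BrauerMonoid.C1_claim hpos l₁ i (-β) h (Or.inr (by rw [neg_neg]; exact hβ.symm))⟩
  obtain ⟨γh, hγhP, hγe, hγE⟩ : ∃ b, IsPR G b ∧ (γ = b ∨ γ = -b) ∧
      Ew (G := G) l₂ j = BrauerMonoid.Ecan G b := by
    rcases root_pos_or_neg hpos hγr with h | h
    · exact ⟨γ, h, Or.inl rfl, BrauerMonoid.C1_claim hpos l₂ j γ h (Or.inl hγ.symm)⟩
    · exact ⟨-γ, h, Or.inr (neg_neg γ).symm,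
        BrauerMonoid.C1_claim hpos l₂ j (-γ) h (Or.inr (by rw [neg_neg]; exact hγ.symm))⟩
  have hform : cartanForm G β γ = cartanForm G βh γh ∨
      cartanForm G β γ = -cartanForm G βh γh := by
    rcases hβe with h1 | h1 <;> rcases hγe with h2 | h2 <;> rw [h1, h2]
    · exact Or.inl rfl
    · exact Or.inr (form_neg_right _ _)
    · exact Or.inr (form_neg_left _ _)
    · left
      rw [form_neg_left, form_neg_right, neg_neg]
  constructor
  · intro h0
    have h0' : cartanForm G βh γh = 0 := by
      rcases hform with h | h
      · rw [← h]; exact h0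
      · have h' := h
        rw [h0] at h'
        linarith
    have hcomm := BrauerMonoid.EA_claim hpos (htN βh) βh hβhP le_rfl γh hγhP h0'
    rw [hEβ', hEγ', hβE, hγE]
    exact hcomm.eq
  · intro habs
    have h1 : cartanForm G β γ = 1 ∨ cartanForm G β γ = -1 :=
      (abs_eq (by norm_num)).mp habs
    have h1' : cartanForm G βh γh = 1 ∨ cartanForm G βh γh = -1 := by
      rcases hform with h | h <;> rcases h1 with h2 | h2
      · left; rw [← h]; exact h2
      · right; rw [← h]; exact h2
      · right; have := h.symm.trans h2; linarith
      · left; have := h.symm.trans h2; linarith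
    have hkey := BrauerMonoid.EB_claim hpos (htN βh) βh hβhP le_rfl γh hγhP h1'
    rw [hEβ', hEγ', hβE, hγE]
    exact hkey
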